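/- Suppose a(t) ∈ ℂ[[t]] has the form a(t) = t^{v₀} + a_M t^M + (higher order terms) with M > v₀ and v₀ ≥ 1. Let b(t) = Σ_{n≥1} b_n t^n be a formal change of variable with a(b(t)) = t^{v₀}. Then b₁^{v₀} = 1, b₂ = b₃ = ... = b_{M-v₀} = 0, and if a_M ≠ 0 then b_{M-v₀+1} ≠ 0. -/

import Mathlib

/-- Formal composition `a ∘ b` of one-variable power series, valid (and agreeing with
the usual substitution) when `b` has zero constant term. -/
noncomputable def pcomp (a b : PowerSeries ℂ) : PowerSeries ℂ :=
  PowerSeries.mk fun n =>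
    ∑ k ∈ Finset.range (n + 1), PowerSeries.coeff (R := ℂ) k a * PowerSeries.coeff (R := ℂ) n (b ^ k)

/-!
Write `b = t c`. Then `b^k = t^k c^k`, and if `c = c₀ + t^m e` then
`c^k ≡ c₀^k + k c₀^(k-1) t^m e` modulo `t^(2m)`, so the coefficient of `t^(k+m)` in `b^k` is
`k b₁^(k-1) b_(m+1)` as long as `b₂ = ⋯ = b_m = 0`. Comparing the coefficients of
`t^v₀, …, t^M` on both sides of `a(b(t)) = t^v₀`, only the terms `b^v₀` and `a_M b^M` of
`a(b(t))` contribute, which gives `b₁^v₀ = 1`, then `b_j = 0` inductively for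
`2 ≤ j ≤ M - v₀`, and finally `v₀ b₁^(v₀-1) b_(M-v₀+1) + a_M b₁^M = 0`.
-/

open PowerSeries

section CommSemiring

variable {R : Type*} [CommSemiring R]

theorem PowerSeries.coeff_pow_eq_zero_of_lt {b : R⟦X⟧} (hb : constantCoeff b = 0) {n k : ℕ}
    (h : n < k) : coeff n (b ^ k) = 0 :=
  X_pow_dvd_iff.mp (pow_dvd_pow_of_dvd (X_dvd_iff.mpr hb) k) n h

theorem PowerSeries.coeff_pow_self {b : R⟦X⟧} (hb : constantCoeff b = 0) (k : ℕ) :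
    coeff k (b ^ k) = coeff 1 b ^ k := by
  obtain ⟨c, rfl⟩ := X_dvd_iff.mpr hb
  simpa [mul_pow] using coeff_X_pow_mul (c ^ k) k 0

end CommSemiring

section CommRing

variable {R : Type*} [CommRing R]

theorem PowerSeries.coeff_pow_of_coeff_eq_zero {c : R⟦X⟧} {m : ℕ} (hm : m ≠ 0)
    (hgap : ∀ i, 0 < i → i < m → coeff i c = 0) (k : ℕ) :
    coeff m (c ^ k) = k * constantCoeff c ^ (k - 1) * coeff m c := by
  set c₀ := constantCoeff c
  obtain ⟨e, he⟩ : X ^ m ∣ c - C c₀ := X_pow_dvd_iff.mpr fun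
    | 0, _ => by simp [c₀]
    | i + 1, hi => by simp [hgap (i + 1) i.succ_pos hi]
  rw [sub_eq_iff_eq_add'] at he
  have hdvd : X ^ (m + 1) ∣
      (C c₀ + X ^ m * e) ^ k - C c₀ ^ (k - 1) * (X ^ m * e) * (k : R⟦X⟧) - C c₀ ^ k := by
    refine dvd_trans ?_ (sq_dvd_add_pow_sub_sub _ _ k)
    rw [mul_pow, ← pow_mul]
    exact (pow_dvd_pow X (by omega)).mul_right _
  have hXe : coeff m (X ^ m * e) = constantCoeff e := by
    simpa using coeff_X_pow_mul e m 0
  have hlin :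
      C c₀ ^ (k - 1) * (X ^ m * e) * (k : R⟦X⟧) = C (k * c₀ ^ (k - 1)) * (X ^ m * e) := by
    rw [map_mul, map_pow, map_natCast]
    ring
  have hcoeff := X_pow_dvd_iff.mp hdvd m m.lt_succ_self
  rw [map_sub, map_sub, sub_eq_zero, sub_eq_iff_eq_add, ← he, hlin, coeff_C_mul, hXe, ← map_pow,
    coeff_C, if_neg hm, zero_add] at hcoeff
  rw [hcoeff, he, map_add, coeff_C, if_neg hm, zero_add, hXe]

theorem PowerSeries.coeff_add_pow_of_coeff_eq_zero {b : R⟦X⟧} (hb : constantCoeff b = 0)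
    {m : ℕ} (hm : m ≠ 0) (hgap : ∀ i, 2 ≤ i → i ≤ m → coeff i b = 0) (k : ℕ) :
    coeff (m + k) (b ^ k) = k * coeff 1 b ^ (k - 1) * coeff (m + 1) b := by
  obtain ⟨c, rfl⟩ := X_dvd_iff.mpr hb
  rw [mul_pow, coeff_X_pow_mul, coeff_succ_X_mul, coeff_succ_X_mul,
    coeff_zero_eq_constantCoeff_apply]
  exact coeff_pow_of_coeff_eq_zero hm (fun i hi him => by
    simpa using hgap (i + 1) (by omega) (by omega)) k

theorem PowerSeries.coeff_eq_zero_of_coeff_add_pow_eq_zero [IsDomain R] [CharZero R] {b : R⟦X⟧}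
    (hb : constantCoeff b = 0) (hb₁ : coeff 1 b ≠ 0) {k N : ℕ} (hk : k ≠ 0)
    (h : ∀ m, 0 < m → m < N → coeff (m + k) (b ^ k) = 0) :
    ∀ j, 2 ≤ j → j ≤ N → coeff j b = 0 := by
  intro j
  induction j using Nat.strong_induction_on with
  | _ j ih =>
    intro hj hjN
    obtain ⟨m, rfl⟩ : ∃ m, j = m + 1 := ⟨j - 1, by omega⟩
    have hm := h m (by omega) (by omega)
    rw [coeff_add_pow_of_coeff_eq_zero hb (by omega)
      (fun i hi him => ih i (by omega) hi (by omega))] at hm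
    simpa [hk, hb₁] using hm

end CommRing

theorem coeff_pcomp_of_coeff_eq_zero {a b : ℂ⟦X⟧} {v₀ M n : ℕ} (hb : constantCoeff b = 0)
    (hM : v₀ < M) (hlow : ∀ k < v₀, coeff k a = 0)
    (hmid : ∀ k, v₀ < k → k < M → coeff k a = 0) (hn : n ≤ M) :
    coeff n (pcomp a b) = coeff v₀ a * coeff n (b ^ v₀) + coeff M a * coeff n (b ^ M) := by
  rw [pcomp, coeff_mk]
  refine Finset.sum_eq_add v₀ M hM.ne (fun k hk ⟨hkv, hkM⟩ => ?_) (fun hv => ?_)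
    (fun hM' => ?_)
  · rw [Finset.mem_range] at hk
    rcases hkv.lt_or_gt with hkv | hkv
    · rw [hlow k hkv, zero_mul]
    · rw [hmid k hkv (by omega), zero_mul]
  · rw [coeff_pow_eq_zero_of_lt hb (by simpa using hv), mul_zero]
  · rw [coeff_pow_eq_zero_of_lt hb (by simpa using hM'), mul_zero]

theorem change_of_variable_coefficients (a b : PowerSeries ℂ) (v₀ M : ℕ)
    (hv₀ : 1 ≤ v₀) (hM : v₀ < M)
    (hlow : ∀ k < v₀, PowerSeries.coeff (R := ℂ) k a = 0)
    (hv : PowerSeries.coeff (R := ℂ) v₀ a = 1)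
    (hmid : ∀ k, v₀ < k → k < M → PowerSeries.coeff (R := ℂ) k a = 0)
    (hb0 : PowerSeries.coeff (R := ℂ) 0 b = 0)
    (hcomp : pcomp a b = PowerSeries.X ^ v₀) :
    (PowerSeries.coeff (R := ℂ) 1 b) ^ v₀ = 1 ∧
    (∀ k, 2 ≤ k → k ≤ M - v₀ → PowerSeries.coeff (R := ℂ) k b = 0) ∧
    (PowerSeries.coeff (R := ℂ) M a ≠ 0 → PowerSeries.coeff (R := ℂ) (M - v₀ + 1) b ≠ 0) := by
  rw [coeff_zero_eq_constantCoeff_apply] at hb0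
  have hX (n : ℕ) : coeff n (pcomp a b) = if n = v₀ then 1 else 0 := by
    rw [hcomp, coeff_X_pow]
  have hpcomp (n : ℕ) (hn : n ≤ M) :
      coeff n (pcomp a b) = coeff n (b ^ v₀) + coeff M a * coeff n (b ^ M) := by
    rw [coeff_pcomp_of_coeff_eq_zero hb0 hM hlow hmid hn, hv, one_mul]
  have hunit : coeff 1 b ^ v₀ = 1 := by
    have := hX v₀
    rwa [hpcomp v₀ hM.le, coeff_pow_self hb0, coeff_pow_eq_zero_of_lt hb0 hM, mul_zero, add_zero,
      if_pos rfl] at this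
  have hb₁ : coeff 1 b ≠ 0 := ne_zero_pow (by omega) (hunit ▸ one_ne_zero)
  have hgap : ∀ k, 2 ≤ k → k ≤ M - v₀ → coeff k b = 0 :=
    coeff_eq_zero_of_coeff_add_pow_eq_zero hb0 hb₁ (k := v₀) (by omega) fun m hm hmM => by
      have := hX (m + v₀)
      rwa [hpcomp _ (by omega), coeff_pow_eq_zero_of_lt hb0 (show m + v₀ < M by omega), mul_zero,
        add_zero, if_neg (by omega)] at this
  refine ⟨hunit, hgap, fun haM hbM => ?_⟩
  have hbv := coeff_add_pow_of_coeff_eq_zero hb0 (m := M - v₀) (by omega) hgap v₀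
  rw [Nat.sub_add_cancel hM.le, hbM, mul_zero] at hbv
  have := hX M
  rw [hpcomp M le_rfl, hbv, coeff_pow_self hb0, zero_add, if_neg hM.ne'] at this
  exact mul_ne_zero haM (pow_ne_zero _ hb₁) this
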